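/- Let M > 0, U₀ > 0, and let f : [1, ∞) → ℝ be continuous with |f(v)| ≤ C·v^{−3} for some C > 0 (for all v ≥ 1). Suppose φ : [−U₀, ∞) × [1, ∞) → ℝ and r : [−U₀, ∞) × [1, ∞) → (0, ∞) with r(u, v) ≥ max(v/2, 1) whenever u ≤ v/2. If |Φ(u', v)| ≤ C/(1 + max(u',0))² for all u', v (with Φ = rφ), then for every u ≥ 1 and v ≥ 2u, the integral ∫_{−U₀}^{v/2} (2M/r(u',v)³)·|Φ(u',v)| du' is bounded by C'·u^{−3} for a constant C' depending only on M, U₀, C. -/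

import Mathlib

/-!
For `u' ≤ v/2` the lower bound `r ≥ v/2 ≥ u` controls the kernel `2M/r³` by `2M/u³`, uniformly
in `u'`. What is left is `∫ C (1 + u'₊)⁻²`, which stays below `C (U₀ + 1)` however large `v` is:
the interval `[-U₀, 0]` has length `U₀` and `(1 + u')⁻²` has integral at most `1` over `[0, ∞)`.
-/

open MeasureTheory Set

-- `f` need not be integrable: its integral is then the junk value `0`.
theorem intervalIntegral.integral_mono_on_of_nonneg {f g : ℝ → ℝ} {a b : ℝ} (hab : a ≤ b)
    (hf : ∀ x ∈ Icc a b, 0 ≤ f x) (hfg : ∀ x ∈ Icc a b, f x ≤ g x)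
    (hg : IntervalIntegrable g volume a b) :
    ∫ x in a..b, f x ≤ ∫ x in a..b, g x := by
  rw [intervalIntegral.integral_of_le hab, intervalIntegral.integral_of_le hab]
  exact setIntegral_mono_of_nonneg (fun x hx => hf x (Ioc_subset_Icc_self hx))
    (fun x hx => hfg x (Ioc_subset_Icc_self hx)) hg.1

theorem continuous_inv_one_add_max_zero_sq : Continuous fun x : ℝ => ((1 + max x 0) ^ 2)⁻¹ :=
  Continuous.inv₀ (by fun_prop) fun x => by positivity

theorem integral_inv_one_add_sq_le_one {b : ℝ} (hb : 0 ≤ b) :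
    ∫ x in (0 : ℝ)..b, ((1 + x) ^ 2)⁻¹ ≤ 1 := by
  have hzpow : ∀ x : ℝ, ((1 + x) ^ 2)⁻¹ = (1 + x) ^ (-2 : ℤ) := fun x => by
    rw [zpow_neg, zpow_ofNat]
  simp only [hzpow]
  rw [intervalIntegral.integral_comp_add_left (fun x => x ^ (-2 : ℤ)), integral_zpow]
  · norm_num
    rw [div_neg, div_one, neg_sub]
    exact sub_le_self _ (by positivity)
  · refine Or.inr ⟨by norm_num, fun h0 => ?_⟩
    rw [uIcc_of_le (by linarith)] at h0
    linarith [h0.1]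

theorem integral_inv_one_add_max_zero_sq_le {a b : ℝ} (ha : 0 ≤ a) (hb : 0 ≤ b) :
    ∫ x in -a..b, ((1 + max x 0) ^ 2)⁻¹ ≤ a + 1 := by
  have hint := continuous_inv_one_add_max_zero_sq.intervalIntegrable (μ := volume)
  rw [← intervalIntegral.integral_add_adjacent_intervals (hint (-a) 0) (hint 0 b)]
  gcongr
  · calc ∫ x in -a..0, ((1 + max x 0) ^ 2)⁻¹ ≤ ∫ _ in -a..0, (1 : ℝ) :=
          intervalIntegral.integral_mono_on (by linarith) (hint _ _) intervalIntegrable_const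
            fun x _ => inv_le_one_of_one_le₀ (one_le_pow₀ (by simp))
      _ = a := by simp
  · calc ∫ x in (0 : ℝ)..b, ((1 + max x 0) ^ 2)⁻¹ = ∫ x in (0 : ℝ)..b, ((1 + x) ^ 2)⁻¹ :=
          intervalIntegral.integral_congr fun x hx => by
            rw [uIcc_of_le hb] at hx
            rw [max_eq_left hx.1]
      _ ≤ 1 := integral_inv_one_add_sq_le_one hb

theorem splitting_estimate_general (M U₀ C : ℝ) (hM : 0 < M) (hU₀ : 0 < U₀) (hC : 0 < C)
    (φ r : ℝ → ℝ → ℝ)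
    (hrlb : ∀ u ∈ Set.Ici (-U₀), ∀ v ∈ Set.Ici (1:ℝ), u ≤ v/2 → max (v/2) 1 ≤ r u v)
    (hΦ : ∀ u' ∈ Set.Ici (-U₀), ∀ v ∈ Set.Ici (1:ℝ),
      |r u' v * φ u' v| ≤ C / (1 + max u' 0)^2) :
    ∃ C' > 0, ∀ u ≥ (1:ℝ), ∀ v ≥ 2*u,
      (∫ u' in (-U₀)..(v/2), (2*M / (r u' v)^3) * |r u' v * φ u' v|)
        ≤ C' * u ^ (-3 : ℝ) := by
  refine ⟨2 * M * C * (U₀ + 1), by positivity, fun u hu v hv => ?_⟩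
  have hv : v ∈ Ici (1 : ℝ) := show 1 ≤ v by linarith
  have hr : ∀ x ∈ Icc (-U₀) (v / 2), u ≤ r x v := fun x hx =>
    (show u ≤ v / 2 by linarith).trans ((le_max_left _ _).trans (hrlb x hx.1 v hv hx.2))
  have hbound : ∀ x ∈ Icc (-U₀) (v / 2), 2 * M / r x v ^ 3 * |r x v * φ x v|
      ≤ 2 * M * C / u ^ 3 * ((1 + max x 0) ^ 2)⁻¹ := fun x hx => by
    have hux := hr x hx
    calc 2 * M / r x v ^ 3 * |r x v * φ x v| ≤ 2 * M / u ^ 3 * (C / (1 + max x 0) ^ 2) := by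
          gcongr
          exact hΦ x hx.1 v hv
      _ = _ := by ring
  have hnonneg : ∀ x ∈ Icc (-U₀) (v / 2), 0 ≤ 2 * M / r x v ^ 3 * |r x v * φ x v| :=
    fun x hx => mul_nonneg (div_nonneg (by positivity) (pow_nonneg (by linarith [hr x hx]) 3))
      (abs_nonneg _)
  calc ∫ x in -U₀..v / 2, 2 * M / r x v ^ 3 * |r x v * φ x v|
      ≤ ∫ x in -U₀..v / 2, 2 * M * C / u ^ 3 * ((1 + max x 0) ^ 2)⁻¹ :=
        intervalIntegral.integral_mono_on_of_nonneg (by linarith) hnonneg hbound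
          ((continuous_inv_one_add_max_zero_sq.intervalIntegrable _ _).const_mul _)
    _ = 2 * M * C / u ^ 3 * ∫ x in -U₀..v / 2, ((1 + max x 0) ^ 2)⁻¹ :=
        intervalIntegral.integral_const_mul _ _
    _ ≤ 2 * M * C / u ^ 3 * (U₀ + 1) := by
        gcongr
        exact integral_inv_one_add_max_zero_sq_le hU₀.le (by linarith)
    _ = 2 * M * C * (U₀ + 1) * u ^ (-3 : ℝ) := by
        rw [Real.rpow_neg_ofNat, zpow_neg, zpow_ofNat]
        ring

theorem splitting_estimate (M U₀ C : ℝ) (hM : 0 < M) (hU₀ : 0 < U₀) (hC : 0 < C)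
    (f : ℝ → ℝ) (hfcont : ContinuousOn f (Set.Ici 1))
    (hf : ∀ v ≥ (1:ℝ), |f v| ≤ C * v ^ (-3 : ℝ))
    (φ r : ℝ → ℝ → ℝ)
    (hrpos : ∀ u ∈ Set.Ici (-U₀), ∀ v ∈ Set.Ici (1:ℝ), 0 < r u v)
    (hrlb : ∀ u ∈ Set.Ici (-U₀), ∀ v ∈ Set.Ici (1:ℝ), u ≤ v/2 → max (v/2) 1 ≤ r u v)
    (hΦ : ∀ u' ∈ Set.Ici (-U₀), ∀ v ∈ Set.Ici (1:ℝ),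
      |r u' v * φ u' v| ≤ C / (1 + max u' 0)^2) :
    ∃ C' > 0, ∀ u ≥ (1:ℝ), ∀ v ≥ 2*u,
      (∫ u' in (-U₀)..(v/2), (2*M / (r u' v)^3) * |r u' v * φ u' v|)
        ≤ C' * u ^ (-3 : ℝ) :=
  splitting_estimate_general M U₀ C hM hU₀ hC φ r hrlb hΦ
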